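/- Let M and N be matroids with finite disjoint ground sets S and T, and let L be the free product M □ N. Let U ⊆ S ∪ T satisfy |U| = |S| and rk_L(U) = rk(M), and let V = (S ∪ T) \ U. Then there exist a bijective weak map from L|U to M and a bijective weak map from L/U to N; moreover these can be chosen as follows: for any bijection f : V ∩ S → U ∩ T, the bijection φ₁ : U → S that is the identity on U ∩ S and equals f⁻¹ on U ∩ T is a weak map from L|U to M, and the bijection φ₂ : V → T that is the identity on V ∩ T and equals f on V ∩ S is a weak map from L/U to N. -/

import Mathlib

open Set Matroid

/-- The rank of a set `X` in a matroid `M`: the maximum cardinality of an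
independent subset of `X`.  For `X = M.E` this is the rank of `M`. -/
noncomputable def mrk {α : Type*} (M : Matroid α) (X : Set α) : ℕ :=
  sSup (Set.ncard '' {I | M.Indep I ∧ I ⊆ X})

/-- The contraction `L / C`, defined as the dual of the deletion of `C` from the dual:
`L / C = (L✶ \ C)✶`. -/
noncomputable def mcontract {α : Type*} (L : Matroid α) (C : Set α) : Matroid α :=
  (L✶ ↾ (L.E \ C))✶

/-!
Restriction: for `A` independent in `M`, the part `f '' (A \ U)` in `T` has at most
`|A \ U| ≤ rk(M) - |A ∩ U|` elements, which bounds its nullity in `N`.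

Contraction: let `I` be an `M`-basis of `U ∩ S`. An `L`-basis of `U` shows
`rk(M) = rk_L(U) ≤ |I| + |U ∩ T|`. If equality holds, `I ∪ (U ∩ T)` is an `L`-basis of `U` and,
since `|U ∩ T| = |S \ U|`, `I ∪ (S \ U)` is independent in `M`; otherwise every element of
`U ∩ T` is a loop of `N`, so `f⁻¹' E` misses `S \ U`. In both cases `E \ U` plus the pulled-back
elements extend a basis of `U` to an independent set of `L`, because each element of `S \ U`
that is added is paid for by an element of `E ∩ U` that the basis already contains.
-/

namespace Set

variable {α : Type*}

lemma ncard_inter_add_ncard_inter_of_subset_union {S T X : Set α} (hST : Disjoint S T)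
    (hXST : X ⊆ S ∪ T) (hX : X.Finite) : (X ∩ S).ncard + (X ∩ T).ncard = X.ncard := by
  rw [← ncard_union_eq (hST.mono inter_subset_right inter_subset_right)
    (hX.inter_of_left S) (hX.inter_of_left T), ← inter_union_distrib_left, inter_eq_left.2 hXST]

lemma ncard_inter_eq_ncard_sdiff_of_ncard_eq {S T U : Set α} (hS : S.Finite) (hT : T.Finite)
    (hST : Disjoint S T) (hU : U ⊆ S ∪ T) (hUS : U.ncard = S.ncard) :
    (U ∩ T).ncard = (S \ U).ncard := by
  have hUsplit := ncard_inter_add_ncard_inter_of_subset_union hST hU ((hS.union hT).subset hU)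
  have hSsplit := ncard_inter_add_ncard_sdiff_eq_ncard S U hS
  rw [inter_comm S U] at hSsplit
  omega

lemma exists_bijOn_sdiff_inter {S T U : Set α} (hS : S.Finite) (hT : T.Finite)
    (hST : Disjoint S T) (hU : U ⊆ S ∪ T) (hUS : U.ncard = S.ncard) :
    ∃ f : α → α, BijOn f (S \ U) (U ∩ T) := by
  rcases isEmpty_or_nonempty α with _ | _
  · exact ⟨id, by simp [eq_empty_of_isEmpty]⟩
  refine (hS.subset sdiff_subset).exists_bijOn_of_encard_eq ?_
  rw [← (hS.subset sdiff_subset).cast_ncard_eq, ← (hT.subset inter_subset_right).cast_ncard_eq,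
    ncard_inter_eq_ncard_sdiff_of_ncard_eq hS hT hST hU hUS]

end Set

namespace Matroid

variable {α : Type*}

section mrk

variable {M : Matroid α} {I J X : Set α}

lemma Indep.ncard_le_ncard_of_isBasis' (hX : X.Finite) (hJ : M.Indep J) (hJX : J ⊆ X)
    (hI : M.IsBasis' I X) : J.ncard ≤ I.ncard := by
  have h := hJ.encard_le_eRk_of_subset hJX
  rw [← hI.encard_eq_eRk, ← (hX.subset hJX).cast_ncard_eq,
    ← (hX.subset hI.subset).cast_ncard_eq] at h
  exact_mod_cast h

lemma IsBasis'.mrk_eq_ncard (hX : X.Finite) (hI : M.IsBasis' I X) : mrk M X = I.ncard := by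
  have hle : ∀ n ∈ ncard '' {J | M.Indep J ∧ J ⊆ X}, n ≤ I.ncard := by
    rintro n ⟨J, ⟨hJ, hJX⟩, rfl⟩
    exact hJ.ncard_le_ncard_of_isBasis' hX hJX hI
  have hmem : I.ncard ∈ ncard '' {J | M.Indep J ∧ J ⊆ X} :=
    ⟨I, ⟨hI.indep, hI.subset⟩, rfl⟩
  exact le_antisymm (csSup_le ⟨_, hmem⟩ hle) (le_csSup ⟨_, hle⟩ hmem)

lemma Indep.ncard_le_mrk (hX : X.Finite) (hJ : M.Indep J) (hJX : J ⊆ X) :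
    J.ncard ≤ mrk M X := by
  obtain ⟨I, hI⟩ := M.exists_isBasis' X
  rw [hI.mrk_eq_ncard hX]
  exact hJ.ncard_le_ncard_of_isBasis' hX hJX hI

lemma Indep.mrk_eq_ncard (hI : M.Indep I) (hIfin : I.Finite) : mrk M I = I.ncard :=
  hI.isBasis_self.isBasis'.mrk_eq_ncard hIfin

lemma Indep.isBasis'_of_mrk_le_ncard (hX : X.Finite) (hI : M.Indep I) (hIX : I ⊆ X)
    (hcard : mrk M X ≤ I.ncard) : M.IsBasis' I X := by
  obtain ⟨J, hJ, hIJ⟩ := hI.subset_isBasis'_of_subset hIX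
  rw [hJ.mrk_eq_ncard hX] at hcard
  rwa [eq_of_subset_of_ncard_le hIJ hcard (hX.subset hJ.subset)]

lemma IsBasis'.indep_union_sdiff {S : Set α} (hS : S.Finite) (hI : M.IsBasis' I (X ∩ S))
    (hcard : I.ncard + (S \ X).ncard ≤ mrk M S) : M.Indep (I ∪ (S \ X)) := by
  obtain ⟨J, hJ, hIJ⟩ := hI.indep.subset_isBasis'_of_subset (hI.subset.trans inter_subset_right)
  have hJI : J \ I ⊆ S \ X := fun e ⟨heJ, heI⟩ ↦ ⟨hJ.subset heJ, fun heX ↦ heI <|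
    hI.inter_eq_of_subset_indep hIJ hJ.indep ▸ ⟨heJ, heX, hJ.subset heJ⟩⟩
  have hJcard : (J \ I).ncard = J.ncard - I.ncard :=
    ncard_sdiff hIJ (hS.subset (hIJ.trans hJ.subset))
  rw [hJ.mrk_eq_ncard hS] at hcard
  have hJI_eq : J \ I = S \ X :=
    eq_of_subset_of_ncard_le hJI (by omega) (hS.subset sdiff_subset)
  exact hJ.indep.subset (union_subset hIJ (hJI_eq ▸ sdiff_subset))

end mrk

lemma mcontract_eq_contract (L : Matroid α) (C : Set α) : mcontract L C = L ／ C := rfl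

/-- `L` has the independent sets of the free product `M □ N`; its ground set is left free. -/
def IsFreeProduct (L M N : Matroid α) (S T : Set α) : Prop :=
  ∀ A : Set α, L.Indep A ↔ A ⊆ S ∪ T ∧ M.Indep (A ∩ S) ∧
    (A ∩ T).ncard - mrk N (A ∩ T) ≤ mrk M S - mrk M (A ∩ S)

namespace IsFreeProduct

variable {L M N : Matroid α} {S T U I Y A E : Set α}

lemma indep_union (hL : IsFreeProduct L M N S T) (hS : S.Finite) (hST : Disjoint S T)
    {P Q : Set α} (hPS : P ⊆ S) (hQT : Q ⊆ T) (hP : M.Indep P)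
    (hQ : Q.ncard - mrk N Q ≤ mrk M S - P.ncard) : L.Indep (P ∪ Q) := by
  have hPQS : (P ∪ Q) ∩ S = P := by
    rw [union_inter_distrib_right, inter_eq_left.2 hPS, (hST.mono_right hQT).symm.inter_eq,
      union_empty]
  have hPQT : (P ∪ Q) ∩ T = Q := by
    rw [union_inter_distrib_right, inter_eq_left.2 hQT, (hST.mono_left hPS).inter_eq,
      empty_union]
  rw [hL, hPQS, hPQT, hP.mrk_eq_ncard (hS.subset hPS)]
  exact ⟨union_subset_union hPS hQT, hP, hQ⟩

lemma mrk_le_mrk_inter_add_ncard_inter (hL : IsFreeProduct L M N S T) (hST : Disjoint S T)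
    {X : Set α} (hX : X.Finite) : mrk L X ≤ mrk M (X ∩ S) + (X ∩ T).ncard := by
  obtain ⟨B, hB⟩ := L.exists_isBasis' X
  obtain ⟨hBST, hBS, -⟩ := (hL B).1 hB.indep
  rw [hB.mrk_eq_ncard hX,
    ← ncard_inter_add_ncard_inter_of_subset_union hST hBST (hX.subset hB.subset)]
  have hS := hBS.ncard_le_mrk (hX.inter_of_left S) (inter_subset_inter_left S hB.subset)
  have hT := ncard_le_ncard (inter_subset_inter_left T hB.subset) (hX.inter_of_left T)
  omega

lemma restrict_indep_union_image (hL : IsFreeProduct L M N S T) (hS : S.Finite)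
    (hST : Disjoint S T) {f : α → α} (hf : InjOn f (S \ U)) (hfU : MapsTo f (S \ U) (U ∩ T))
    (hAS : A ⊆ S) (hA : M.Indep A) : (L ↾ U).Indep ((A ∩ U) ∪ f '' (A \ U)) := by
  have hAU : A \ U ⊆ S \ U := sdiff_subset_sdiff_left hAS
  have himg : f '' (A \ U) ⊆ U ∩ T := (image_mono hAU).trans hfU.image_subset
  have hcard : (f '' (A \ U)).ncard = (A \ U).ncard := (hf.mono hAU).ncard_image
  have hsplit := ncard_inter_add_ncard_sdiff_eq_ncard A U (hS.subset hAS)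
  have hArk := hA.ncard_le_mrk hS hAS
  rw [restrict_indep_iff]
  refine ⟨hL.indep_union hS hST (inter_subset_left.trans hAS) (himg.trans inter_subset_right)
    (hA.subset inter_subset_left) (by omega), union_subset inter_subset_right
    (himg.trans inter_subset_left)⟩

lemma isBasis'_union (hL : IsFreeProduct L M N S T) (hS : S.Finite) (hST : Disjoint S T)
    (hU : U.Finite) (hrk : mrk L U = mrk M S) (hI : M.IsBasis' I (U ∩ S)) (hYUT : Y ⊆ U ∩ T)
    (hIY : I.ncard + Y.ncard = mrk M S) : L.IsBasis' (I ∪ Y) U := by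
  have hIS : I ⊆ S := hI.subset.trans inter_subset_right
  have hind : L.Indep (I ∪ Y) :=
    hL.indep_union hS hST hIS (hYUT.trans inter_subset_right) hI.indep (by omega)
  refine hind.isBasis'_of_mrk_le_ncard hU
    (union_subset (hI.subset.trans inter_subset_left) (hYUT.trans inter_subset_left)) ?_
  rw [hrk, ncard_union_eq (hST.mono_left hIS |>.mono_right (hYUT.trans inter_subset_right))
    (hS.subset hIS) (hU.subset (hYUT.trans inter_subset_left)), hIY]

lemma contract_indep_union (hL : IsFreeProduct L M N S T) (hS : S.Finite) (hT : T.Finite)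
    (hST : Disjoint S T) (hB : L.IsBasis' (I ∪ Y) U) (hIS : I ⊆ S) (hYT : Y ⊆ T)
    (hIY : I.ncard + Y.ncard ≤ mrk M S) (hAS : A ⊆ S \ U) (hAI : M.Indep (A ∪ I))
    (hET : E ⊆ T) (hE : N.Indep E) (hEY : E ∩ U ⊆ Y) (hAE : A.ncard ≤ (E ∩ U).ncard) :
    (mcontract L U).Indep ((E \ U) ∪ A) := by
  rw [mcontract_eq_contract, hB.contract_indep_iff]
  refine ⟨?_,
    disjoint_union_right.2 ⟨disjoint_sdiff_right, disjoint_sdiff_right.mono_right hAS⟩⟩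
  have hrearr : (E \ U ∪ A) ∪ (I ∪ Y) = (A ∪ I) ∪ ((E \ U) ∪ Y) := by
    ext x; simp only [mem_union]; tauto
  have hQT : (E \ U) ∪ Y ⊆ T := union_subset (sdiff_subset.trans hET) hYT
  have hEQ : E ⊆ (E \ U) ∪ Y := fun x hx ↦ by
    by_cases hxU : x ∈ U
    exacts [Or.inr (hEY ⟨hx, hxU⟩), Or.inl ⟨hx, hxU⟩]
  -- `ν_N((E \ U) ∪ Y) ≤ |E \ U| + |Y| - |E| ≤ |Y| - |A|` as `E` is independent inside it
  have hErk := hE.ncard_le_mrk (hT.subset hQT) hEQ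
  have hQcard := ncard_union_le (E \ U) Y
  have hAIcard := ncard_union_le A I
  have hEsplit := ncard_inter_add_ncard_sdiff_eq_ncard E U (hT.subset hET)
  rw [hrearr]
  exact hL.indep_union hS hST (union_subset (hAS.trans sdiff_subset) hIS) hQT hAI (by omega)

lemma exists_indep_union_of_indep_singleton (hL : IsFreeProduct L M N S T) (hS : S.Finite)
    (hST : Disjoint S T) (hIS : I ⊆ S) (hI : M.Indep I) {Z : Set α} (hZT : Z ⊆ T)
    (hZ : Z.Finite) {x : α} (hxZ : x ∈ Z) (hx : N.Indep {x}) :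
    ∃ Y ⊆ Z, L.Indep (I ∪ Y) ∧ Y.ncard = min Z.ncard (mrk M S - I.ncard + 1) := by
  have hZpos : 0 < Z.ncard := (ncard_pos hZ).2 ⟨x, hxZ⟩
  obtain ⟨X, hXZ, hXcard⟩ := exists_subset_card_eq
    (show min Z.ncard (mrk M S - I.ncard + 1) - 1 ≤ (Z \ {x}).ncard by
      rw [ncard_sdiff_singleton_of_mem hxZ]; omega)
  have hxX : x ∉ X := fun h ↦ (hXZ h).2 rfl
  have hYZ : insert x X ⊆ Z := insert_subset hxZ (hXZ.trans sdiff_subset)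
  have hYcard : (insert x X).ncard = X.ncard + 1 := ncard_insert_of_notMem hxX (hZ.subset
    (hXZ.trans sdiff_subset))
  have hYrk := hx.ncard_le_mrk (hZ.subset hYZ) (singleton_subset_iff.2 (mem_insert x X))
  rw [ncard_singleton] at hYrk
  exact ⟨insert x X, hYZ, hL.indep_union hS hST hIS (hYZ.trans hZT) hI (by omega), by omega⟩

/-- A non-loop of `N` in `U ∩ T` would let a basis of `U ∩ S` grow past `rk(M)` inside `U`. -/
lemma not_indep_singleton_of_lt (hL : IsFreeProduct L M N S T) (hS : S.Finite)
    (hST : Disjoint S T) (hU : U.Finite) (hrk : mrk L U = mrk M S) (hI : M.IsBasis' I (U ∩ S))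
    (hlt : mrk M S < I.ncard + (U ∩ T).ncard) {x : α} (hx : x ∈ U ∩ T) : ¬ N.Indep {x} := by
  intro hxN
  have hIS : I ⊆ S := hI.subset.trans inter_subset_right
  obtain ⟨Y, hYUT, hIY, hYcard⟩ := hL.exists_indep_union_of_indep_singleton hS hST hIS hI.indep
    inter_subset_right (hU.inter_of_left T) hx hxN
  have hIYU : I ∪ Y ⊆ U := union_subset (hI.subset.trans inter_subset_left)
    (hYUT.trans inter_subset_left)
  have hIYcard := hIY.ncard_le_mrk hU hIYU
  rw [hrk, ncard_union_eq (hST.mono hIS (hYUT.trans inter_subset_right)) (hS.subset hIS)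
    (hU.subset (hYUT.trans inter_subset_left))] at hIYcard
  have hIrk := hI.indep.ncard_le_mrk hS hIS
  omega

lemma contract_indep_union_preimage (hL : IsFreeProduct L M N S T) (hS : S.Finite)
    (hT : T.Finite) (hST : Disjoint S T) (hU : U ⊆ S ∪ T) (hUS : U.ncard = S.ncard)
    (hrk : mrk L U = mrk M S) {f : α → α} (hf : InjOn f (S \ U))
    (hfU : MapsTo f (S \ U) (U ∩ T)) (hET : E ⊆ T) (hE : N.Indep E) :
    (mcontract L U).Indep ((E \ U) ∪ ((S \ U) ∩ f ⁻¹' E)) := by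
  have hUfin : U.Finite := (hS.union hT).subset hU
  obtain ⟨I, hI⟩ := M.exists_isBasis' (U ∩ S)
  have hIS : I ⊆ S := hI.subset.trans inter_subset_right
  set A := (S \ U) ∩ f ⁻¹' E
  have hAS : A ⊆ S \ U := inter_subset_left
  have hAE : A.ncard ≤ (E ∩ U).ncard := ncard_le_ncard_of_injOn f
    (fun x hx ↦ ⟨hx.2, (hfU hx.1).1⟩) (hf.mono hAS) (hT.subset (inter_subset_left.trans hET))
  have hle : mrk M S ≤ I.ncard + (U ∩ T).ncard := by
    rw [← hI.mrk_eq_ncard (hUfin.inter_of_left S), ← hrk]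
    exact hL.mrk_le_mrk_inter_add_ncard_inter hST hUfin
  rcases hle.eq_or_lt with heq | hlt
  · have hUT := ncard_inter_eq_ncard_sdiff_of_ncard_eq hS hT hST hU hUS
    have hAI : M.Indep (A ∪ I) := (hI.indep_union_sdiff hS (by omega)).subset
      (union_subset (hAS.trans subset_union_right) subset_union_left)
    exact hL.contract_indep_union hS hT hST
      (hL.isBasis'_union hS hST hUfin hrk hI Subset.rfl heq.symm) hIS inter_subset_right
      heq.ge hAS hAI hET hE (fun x hx ↦ ⟨hx.2, hET hx.1⟩) hAE
  · have hEU : E ∩ U = ∅ := eq_empty_of_forall_notMem fun x hx ↦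
      hL.not_indep_singleton_of_lt hS hST hUfin hrk hI hlt ⟨hx.2, hET hx.1⟩
        (hE.subset (singleton_subset_iff.2 hx.1))
    have hA : A = ∅ := by
      rwa [hEU, ncard_empty, Nat.le_zero,
        ncard_eq_zero (hS.subset (hAS.trans sdiff_subset))] at hAE
    obtain ⟨Y, hYUT, hYcard⟩ :=
      exists_subset_card_eq (show mrk M S - I.ncard ≤ (U ∩ T).ncard by omega)
    have hIrk := hI.indep.ncard_le_mrk hS hIS
    rw [hA]
    exact hL.contract_indep_union hS hT hST
      (hL.isBasis'_union hS hST hUfin hrk hI hYUT (by omega)) hIS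
      (hYUT.trans inter_subset_right) (by omega) (empty_subset _) (by simpa using hI.indep) hET hE
      (by simp [hEU]) (by simp)

end IsFreeProduct

end Matroid

theorem stmt_12_general {α : Type*} (M N : Matroid α) (S T : Set α)
    (hS : S.Finite) (hT : T.Finite)
    (hST : Disjoint S T)
    (L : Matroid α)
    (hLI : ∀ A : Set α, L.Indep A ↔ A ⊆ S ∪ T ∧ M.Indep (A ∩ S) ∧
      (A ∩ T).ncard - mrk N (A ∩ T) ≤ mrk M S - mrk M (A ∩ S))
    (U : Set α) (hU : U ⊆ S ∪ T) (hUcard : U.ncard = S.ncard)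
    (hrk : mrk L U = mrk M S) :
    (∃ f : α → α, Set.BijOn f (((S ∪ T) \ U) ∩ S) (U ∩ T)) ∧
      ∀ f : α → α, Set.BijOn f (((S ∪ T) \ U) ∩ S) (U ∩ T) →
        (∀ A ⊆ S, M.Indep A → (L ↾ U).Indep ((A ∩ U) ∪ f '' (A \ U))) ∧
        (∀ E ⊆ T, N.Indep E →
          (mcontract L U).Indep ((E \ U) ∪ ((((S ∪ T) \ U) ∩ S) ∩ f ⁻¹' E))) := by
  have hL : IsFreeProduct L M N S T := hLI
  have hV : ((S ∪ T) \ U) ∩ S = S \ U := by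
    rw [sdiff_inter_right_comm, union_inter_cancel_left]
  simp only [hV]
  refine ⟨exists_bijOn_sdiff_inter hS hT hST hU hUcard, fun f hf ↦ ⟨fun A hAS hA ↦ ?_,
    fun E hET hE ↦ ?_⟩⟩
  · exact hL.restrict_indep_union_image hS hST hf.injOn hf.mapsTo hAS hA
  · exact hL.contract_indep_union_preimage hS hT hST hU hUcard hrk hf.injOn hf.mapsTo hET hE

/-- **Theorem 6.** Let `L = M □ N` and let `U ⊆ S ∪ T` satisfy `|U| = |S|` and
`rk_L(U) = rk(M)`, with `V = (S ∪ T) \ U`.  Then there exist bijective weak maps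
`L|U → M` and `L/U → N`; indeed, for any bijection `f : V ∩ S → U ∩ T`, the bijection
`φ₁ : U → S` (identity on `U ∩ S`, `f⁻¹` on `U ∩ T`) is a weak map `L|U → M`, and the
bijection `φ₂ : V → T` (identity on `V ∩ T`, `f` on `V ∩ S`) is a weak map `L/U → N`. -/
theorem stmt_12 {α : Type*} (M N : Matroid α) (S T : Set α)
    (hS : S.Finite) (hT : T.Finite) (hMS : M.E = S) (hNT : N.E = T)
    (hST : Disjoint S T)
    (L : Matroid α) (hLE : L.E = S ∪ T)
    (hLI : ∀ A : Set α, L.Indep A ↔ A ⊆ S ∪ T ∧ M.Indep (A ∩ S) ∧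
      (A ∩ T).ncard - mrk N (A ∩ T) ≤ mrk M S - mrk M (A ∩ S))
    (U : Set α) (hU : U ⊆ S ∪ T) (hUcard : U.ncard = S.ncard)
    (hrk : mrk L U = mrk M S) :
    (∃ f : α → α, Set.BijOn f (((S ∪ T) \ U) ∩ S) (U ∩ T)) ∧
      ∀ f : α → α, Set.BijOn f (((S ∪ T) \ U) ∩ S) (U ∩ T) →
        (∀ A ⊆ S, M.Indep A → (L ↾ U).Indep ((A ∩ U) ∪ f '' (A \ U))) ∧
        (∀ E ⊆ T, N.Indep E →
          (mcontract L U).Indep ((E \ U) ∪ ((((S ∪ T) \ U) ∩ S) ∩ f ⁻¹' E))) :=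
  stmt_12_general M N S T hS hT hST L hLI U hU hUcard hrk
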